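/- arXiv:1312.2253 — 5 statements merged into one kernel-verified Lean document; each statement's English description precedes it below -/
import Mathlib

section
/- Let U and V be centered square-integrable random vectors in ℝ^d with Tr(C_{U,U}) > 0 and Tr(C_{V,V}) > 0. Then Tr(C_{U,U} C_{V,V}) − Tr(C_{U,V} C_{V,U}) ≤ min( ‖C_{U,U}‖/Tr(C_{U,U}), ‖C_{V,V}‖/Tr(C_{V,V}) ) · ( Tr(C_{U,U})·Tr(C_{V,V}) − Tr(C_{U,V})² ), where C_{V,U} = (C_{U,V})ᵀ. Moreover, equality holds if C_{U,U} and C_{U,V} are both scalar multiples of the identity matrix, and likewise if C_{V,V} and C_{U,V} are both scalar multiples of the identity matrix. -/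
open MeasureTheory

/-- The matrix `C_{X,Y} = 𝔼(X ⊗ Y)` with entries `𝔼(X_i Y_j)`. -/
noncomputable def covMatrix {Ω : Type*} [MeasurableSpace Ω] (μ : Measure Ω) {d : ℕ}
    (X Y : Ω → EuclideanSpace ℝ (Fin d)) : Matrix (Fin d) (Fin d) ℝ :=
  Matrix.of fun i j => ∫ ω, X ω i * Y ω j ∂μ

/-- Operator norm of a `d × d` real matrix, acting on Euclidean space. -/
noncomputable def matOpNorm {d : ℕ} (S : Matrix (Fin d) (Fin d) ℝ) : ℝ :=
  ‖LinearMap.toContinuousLinearMap (Matrix.toEuclideanLin S)‖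

/-!
Write `A = C_{U,U}`, `B = C_{V,V}`, `C = C_{U,V}` and take an orthonormal eigenbasis `(vᵢ)` of `A`,
with eigenvalues `0 ≤ λᵢ ≤ ‖A‖`. With `βᵢ = vᵢᵀ B vᵢ` and `cᵢ = vᵢᵀ C vᵢ` one has
`Tr A = ∑ λᵢ`, `Tr(AB) = ∑ λᵢ βᵢ`, `Tr B = ∑ βᵢ`, `Tr C = ∑ cᵢ` and `Tr(C Cᵀ) ≥ ∑ cᵢ²`, while
Cauchy–Schwarz for `𝔼[(vᵢ·U)(vᵢ·V)]` gives `cᵢ² ≤ λᵢ βᵢ`. What remains is a scalar inequality: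
with `tᵢ = cᵢ² / λᵢ ≤ βᵢ`, `∑ λᵢ βᵢ - ∑ cᵢ² = ∑ λᵢ (βᵢ - tᵢ) ≤ ‖A‖ ∑ (βᵢ - tᵢ)`, and
`(∑ cᵢ)² ≤ (∑ λᵢ)(∑ tᵢ)` by Cauchy–Schwarz again. Exchanging `U` and `V` gives the other half of
the minimum. When `A` and `C` are scalar, `‖A‖ / Tr A = 1/d` is the smaller ratio because
`Tr B ≤ d ‖B‖`, and the two sides agree.
-/

open Matrix Finset

theorem sum_mul_sub_sum_sq_le {ι : Type*} [Fintype ι] {a : ℝ} {lam β c : ι → ℝ} (ha : 0 ≤ a)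
    (hlam : ∀ i, 0 ≤ lam i) (hlam_le : ∀ i, lam i ≤ a) (hβ : ∀ i, 0 ≤ β i)
    (hc : ∀ i, c i ^ 2 ≤ lam i * β i) :
    (∑ i, lam i) * (∑ i, lam i * β i - ∑ i, c i ^ 2) ≤
      a * ((∑ i, lam i) * ∑ i, β i - (∑ i, c i) ^ 2) := by
  -- where `lam i = 0` this is the junk value `0`, harmless since then `c i = 0` too
  set t : ι → ℝ := fun i => c i ^ 2 / lam i
  have hct : ∀ i, c i ^ 2 = lam i * t i := fun i => by
    rcases (hlam i).eq_or_lt with h | h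
    · have := hc i
      rw [← h, zero_mul] at this ⊢
      exact le_antisymm this (sq_nonneg _)
    · exact (mul_div_cancel₀ _ h.ne').symm
  have ht : ∀ i, 0 ≤ t i := fun i => div_nonneg (sq_nonneg _) (hlam i)
  have ht_le : ∀ i, t i ≤ β i := fun i => by
    rcases (hlam i).eq_or_lt with h | h
    · simp [t, ← h, hβ i]
    · exact (div_le_iff₀' h).2 (hc i)
  have hcs : (∑ i, c i) ^ 2 ≤ (∑ i, lam i) * ∑ i, t i :=
    sum_sq_le_sum_mul_sum_of_sq_le_mul univ (fun i _ => hlam i) (fun i _ => ht i)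
      fun i _ => (hct i).le
  have hgap : ∑ i, lam i * β i - ∑ i, c i ^ 2 ≤ a * (∑ i, β i - ∑ i, t i) := by
    simp only [hct, ← sum_sub_distrib, mul_sum, ← mul_sub]
    exact sum_le_sum fun i _ => mul_le_mul_of_nonneg_right (hlam_le i) (sub_nonneg.2 (ht_le i))
  have hs : 0 ≤ ∑ i, lam i := sum_nonneg fun i _ => hlam i
  calc (∑ i, lam i) * (∑ i, lam i * β i - ∑ i, c i ^ 2)
      ≤ (∑ i, lam i) * (a * (∑ i, β i - ∑ i, t i)) := mul_le_mul_of_nonneg_left hgap hs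
    _ ≤ a * ((∑ i, lam i) * ∑ i, β i - (∑ i, c i) ^ 2) := by nlinarith

section DotProduct

variable {n : Type*} [Fintype n]

theorem Matrix.trace_eq_sum_dotProduct_mulVec [DecidableEq n] {ι : Type*} [Fintype ι]
    (M : Matrix n n ℝ) (b : OrthonormalBasis ι ℝ (EuclideanSpace ℝ n)) :
    M.trace = ∑ i, ⇑(b i) ⬝ᵥ (M *ᵥ ⇑(b i)) := by
  have h : LinearMap.trace ℝ _ (toEuclideanLin M) = M.trace := by
    rw [toEuclideanLin_eq_toLin_orthonormal, LinearMap.trace_eq_matrix_trace ℝ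
      (EuclideanSpace.basisFun n ℝ).toBasis, LinearMap.toMatrix_toLin]
  rw [← h, LinearMap.trace_eq_sum_inner _ b]
  simp [EuclideanSpace.inner_eq_star_dotProduct, dotProduct_comm]

theorem Matrix.dotProduct_transpose_mulVec_self (C : Matrix n n ℝ) (x : n → ℝ) :
    x ⬝ᵥ (Cᵀ *ᵥ x) = x ⬝ᵥ (C *ᵥ x) := by
  rw [mulVec_transpose, dotProduct_comm, dotProduct_mulVec]

theorem sq_dotProduct_le (x y : n → ℝ) : (x ⬝ᵥ y) ^ 2 ≤ (x ⬝ᵥ x) * (y ⬝ᵥ y) := by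
  simpa only [dotProduct, sq] using sum_mul_sq_le_sq_mul_sq univ x y

theorem Matrix.sq_dotProduct_mulVec_le (C : Matrix n n ℝ) (x : n → ℝ) :
    (x ⬝ᵥ (C *ᵥ x)) ^ 2 ≤ (x ⬝ᵥ x) * (x ⬝ᵥ ((C * Cᵀ) *ᵥ x)) :=
  calc (x ⬝ᵥ (C *ᵥ x)) ^ 2 = (x ⬝ᵥ (Cᵀ *ᵥ x)) ^ 2 := by rw [dotProduct_transpose_mulVec_self]
    _ ≤ (x ⬝ᵥ x) * ((Cᵀ *ᵥ x) ⬝ᵥ (Cᵀ *ᵥ x)) := sq_dotProduct_le _ _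
    _ = (x ⬝ᵥ x) * (x ⬝ᵥ ((C * Cᵀ) *ᵥ x)) := by
      rw [← mulVec_mulVec, dotProduct_mulVec x C, mulVec_transpose]

end DotProduct

section OpNorm

variable {d : ℕ}

theorem matOpNorm_nonneg (S : Matrix (Fin d) (Fin d) ℝ) : 0 ≤ matOpNorm S := norm_nonneg _

theorem dotProduct_mulVec_le_matOpNorm (S : Matrix (Fin d) (Fin d) ℝ) (x : Fin d → ℝ) :
    x ⬝ᵥ (S *ᵥ x) ≤ matOpNorm S * (x ⬝ᵥ x) := by
  set x' := WithLp.toLp 2 x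
  have hx : x ⬝ᵥ x = ‖x'‖ ^ 2 := by
    rw [← real_inner_self_eq_norm_sq, EuclideanSpace.inner_eq_star_dotProduct]
    simp [x']
  calc x ⬝ᵥ (S *ᵥ x) = inner ℝ x' (toEuclideanLin S x') := by
        rw [EuclideanSpace.inner_eq_star_dotProduct]
        simp [x', dotProduct_comm]
    _ ≤ ‖x'‖ * ‖LinearMap.toContinuousLinearMap (toEuclideanLin S) x'‖ := real_inner_le_norm _ _
    _ ≤ ‖x'‖ * (matOpNorm S * ‖x'‖) := by gcongr; exact ContinuousLinearMap.le_opNorm _ _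
    _ = matOpNorm S * (x ⬝ᵥ x) := by rw [hx]; ring

theorem trace_le_mul_matOpNorm (S : Matrix (Fin d) (Fin d) ℝ) : S.trace ≤ d * matOpNorm S :=
  calc S.trace = ∑ i, S i i := rfl
    _ ≤ ∑ _i : Fin d, matOpNorm S := by
        gcongr with i
        simpa using dotProduct_mulVec_le_matOpNorm S (Pi.single i 1)
    _ = d * matOpNorm S := by simp

theorem matOpNorm_smul_one [NeZero d] {a : ℝ} (ha : 0 ≤ a) :
    matOpNorm (a • (1 : Matrix (Fin d) (Fin d) ℝ)) = a := by
  have h : LinearMap.toContinuousLinearMap (toEuclideanLin (a • (1 : Matrix (Fin d) (Fin d) ℝ)))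
      = a • ContinuousLinearMap.id ℝ _ := by
    ext x i
    simp
  rw [matOpNorm, h, norm_smul, ContinuousLinearMap.norm_id, Real.norm_of_nonneg ha, mul_one]

end OpNorm

section Covariance

variable {Ω : Type*} [MeasurableSpace Ω] {μ : Measure Ω}

theorem sq_integral_mul_le {f g : Ω → ℝ} (hf : MemLp f 2 μ) (hg : MemLp g 2 μ) :
    (∫ ω, f ω * g ω ∂μ) ^ 2 ≤ (∫ ω, f ω * f ω ∂μ) * ∫ ω, g ω * g ω ∂μ := by
  have hL2 : ∀ {f g : Ω → ℝ} (hf : MemLp f 2 μ) (hg : MemLp g 2 μ),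
      ∫ ω, f ω * g ω ∂μ = inner ℝ (hf.toLp f) (hg.toLp g) := fun hf hg => by
    rw [L2.inner_def]
    refine integral_congr_ae ?_
    filter_upwards [hf.coeFn_toLp, hg.coeFn_toLp] with ω hfω hgω
    simp [hfω, hgω, mul_comm]
  rw [sq, hL2 hf hg, hL2 hf hf, hL2 hg hg]
  exact real_inner_mul_inner_self_le _ _

variable {d : ℕ}

theorem MeasureTheory.MemLp.const_dotProduct {X : Ω → EuclideanSpace ℝ (Fin d)}
    (hX : MemLp X 2 μ) (x : Fin d → ℝ) : MemLp (fun ω => x ⬝ᵥ X ω) 2 μ := by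
  simpa [EuclideanSpace.inner_eq_star_dotProduct, dotProduct_comm] using
    hX.const_inner (𝕜 := ℝ) (WithLp.toLp 2 x)

theorem covMatrix_transpose (X Y : Ω → EuclideanSpace ℝ (Fin d)) :
    (covMatrix μ X Y)ᵀ = covMatrix μ Y X := by
  ext i j
  simp only [covMatrix, transpose_apply, of_apply, mul_comm]

theorem dotProduct_covMatrix_mulVec {X Y : Ω → EuclideanSpace ℝ (Fin d)} (hX : MemLp X 2 μ)
    (hY : MemLp Y 2 μ) (x y : Fin d → ℝ) :
    x ⬝ᵥ (covMatrix μ X Y *ᵥ y) = ∫ ω, (x ⬝ᵥ X ω) * (y ⬝ᵥ Y ω) ∂μ := by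
  have hint : ∀ i j, Integrable (fun ω => x i * y j * (X ω i * Y ω j)) μ := fun i j => by
    refine Integrable.const_mul ?_ _
    simpa [Pi.mul_def] using
      (hX.const_dotProduct (Pi.single i 1)).integrable_mul (hY.const_dotProduct (Pi.single j 1))
  calc x ⬝ᵥ (covMatrix μ X Y *ᵥ y) = ∑ i, ∑ j, ∫ ω, x i * y j * (X ω i * Y ω j) ∂μ := by
        simp only [dotProduct, mulVec, covMatrix, of_apply, mul_sum, integral_const_mul]
        exact sum_congr rfl fun i _ => sum_congr rfl fun j _ => by ring
    _ = ∫ ω, ∑ i, ∑ j, x i * y j * (X ω i * Y ω j) ∂μ := by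
        rw [integral_finsetSum _ fun i _ => integrable_finsetSum _ fun j _ => hint i j]
        exact sum_congr rfl fun i _ => (integral_finsetSum _ fun j _ => hint i j).symm
    _ = ∫ ω, (x ⬝ᵥ X ω) * (y ⬝ᵥ Y ω) ∂μ := by
        simp only [dotProduct, sum_mul_sum]
        exact integral_congr_ae <| ae_of_all _ fun ω =>
          sum_congr rfl fun i _ => sum_congr rfl fun j _ => by ring

theorem covMatrix_posSemidef {X : Ω → EuclideanSpace ℝ (Fin d)} (hX : MemLp X 2 μ) :
    (covMatrix μ X X).PosSemidef := by
  refine .of_dotProduct_mulVec_nonneg ?_ fun x => ?_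
  · rw [IsHermitian, conjTranspose_eq_transpose_of_trivial, covMatrix_transpose]
  · rw [star_trivial, dotProduct_covMatrix_mulVec hX hX]
    exact integral_nonneg fun ω => mul_self_nonneg _

theorem sq_dotProduct_covMatrix_mulVec_le {X Y : Ω → EuclideanSpace ℝ (Fin d)}
    (hX : MemLp X 2 μ) (hY : MemLp Y 2 μ) (x y : Fin d → ℝ) :
    (x ⬝ᵥ (covMatrix μ X Y *ᵥ y)) ^ 2 ≤
      (x ⬝ᵥ (covMatrix μ X X *ᵥ x)) * (y ⬝ᵥ (covMatrix μ Y Y *ᵥ y)) := by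
  rw [dotProduct_covMatrix_mulVec hX hY, dotProduct_covMatrix_mulVec hX hX,
    dotProduct_covMatrix_mulVec hY hY]
  exact sq_integral_mul_le (hX.const_dotProduct x) (hY.const_dotProduct y)

end Covariance

section TraceInequality

variable {d : ℕ} {A B C : Matrix (Fin d) (Fin d) ℝ}

theorem trace_mul_sub_trace_mul_transpose_le (hA : A.PosSemidef) (hB : B.PosSemidef)
    (hC : ∀ x, (x ⬝ᵥ (C *ᵥ x)) ^ 2 ≤ (x ⬝ᵥ (A *ᵥ x)) * (x ⬝ᵥ (B *ᵥ x))) :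
    A.trace * ((A * B).trace - (C * Cᵀ).trace) ≤
      matOpNorm A * (A.trace * B.trace - C.trace ^ 2) := by
  set b := hA.isHermitian.eigenvectorBasis
  set v : Fin d → Fin d → ℝ := fun i => ⇑(b i)
  set lam := hA.isHermitian.eigenvalues
  have hAv : ∀ i, A *ᵥ v i = lam i • v i := hA.isHermitian.mulVec_eigenvectorBasis
  have hvv : ∀ i, v i ⬝ᵥ v i = 1 := fun i => by
    have h := real_inner_self_eq_norm_sq (b i)
    rw [b.orthonormal.1 i, one_pow, EuclideanSpace.inner_eq_star_dotProduct] at h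
    simpa using h
  have hlam : ∀ i, lam i = v i ⬝ᵥ (A *ᵥ v i) := fun i => by
    rw [hAv, dotProduct_smul, hvv, smul_eq_mul, mul_one]
  have htrA : A.trace = ∑ i, lam i := by
    simp only [A.trace_eq_sum_dotProduct_mulVec b, hlam, v]
  have htrAB : (A * B).trace = ∑ i, lam i * (v i ⬝ᵥ (B *ᵥ v i)) := by
    rw [trace_mul_comm, trace_eq_sum_dotProduct_mulVec _ b]
    simp only [← mulVec_mulVec, hAv, mulVec_smul, dotProduct_smul, smul_eq_mul, v]
  have htrCC : ∑ i, (v i ⬝ᵥ (C *ᵥ v i)) ^ 2 ≤ (C * Cᵀ).trace := by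
    rw [trace_eq_sum_dotProduct_mulVec _ b]
    exact sum_le_sum fun i _ => by simpa [hvv] using sq_dotProduct_mulVec_le C (v i)
  have key := sum_mul_sub_sum_sq_le (β := fun i => v i ⬝ᵥ (B *ᵥ v i)) (matOpNorm_nonneg A)
    hA.eigenvalues_nonneg
    (fun i => (hlam i).trans_le (by simpa [hvv] using dotProduct_mulVec_le_matOpNorm A (v i)))
    (fun i => by simpa using hB.dotProduct_mulVec_nonneg (v i)) (fun i => hlam i ▸ hC (v i))
  rw [htrA, htrAB, B.trace_eq_sum_dotProduct_mulVec b, C.trace_eq_sum_dotProduct_mulVec b]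
  calc (∑ i, lam i) * (∑ i, lam i * (v i ⬝ᵥ (B *ᵥ v i)) - (C * Cᵀ).trace)
      ≤ (∑ i, lam i) * (∑ i, lam i * (v i ⬝ᵥ (B *ᵥ v i)) - ∑ i, (v i ⬝ᵥ (C *ᵥ v i)) ^ 2) := by
        gcongr
        exact sum_nonneg fun i _ => hA.eigenvalues_nonneg i
    _ ≤ _ := key

theorem trace_mul_sub_trace_mul_transpose_swap (A B C : Matrix (Fin d) (Fin d) ℝ) :
    (B * A).trace - (Cᵀ * Cᵀᵀ).trace = (A * B).trace - (C * Cᵀ).trace ∧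
      B.trace * A.trace - Cᵀ.trace ^ 2 = A.trace * B.trace - C.trace ^ 2 := by
  rw [trace_mul_comm B, transpose_transpose, trace_mul_comm Cᵀ, trace_transpose, mul_comm B.trace]
  exact ⟨rfl, rfl⟩

theorem trace_mul_sub_trace_mul_transpose_le_min (hA : A.PosSemidef) (hB : B.PosSemidef)
    (hC : ∀ x, (x ⬝ᵥ (C *ᵥ x)) ^ 2 ≤ (x ⬝ᵥ (A *ᵥ x)) * (x ⬝ᵥ (B *ᵥ x)))
    (hAtr : 0 < A.trace) (hBtr : 0 < B.trace) :
    (A * B).trace - (C * Cᵀ).trace ≤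
      min (matOpNorm A / A.trace) (matOpNorm B / B.trace) *
        (A.trace * B.trace - C.trace ^ 2) := by
  have hCt : ∀ x, (x ⬝ᵥ (Cᵀ *ᵥ x)) ^ 2 ≤ (x ⬝ᵥ (B *ᵥ x)) * (x ⬝ᵥ (A *ᵥ x)) := fun x => by
    rw [dotProduct_transpose_mulVec_self, mul_comm]
    exact hC x
  have hleA := trace_mul_sub_trace_mul_transpose_le hA hB hC
  have hleB := trace_mul_sub_trace_mul_transpose_le hB hA hCt
  obtain ⟨hswap₁, hswap₂⟩ := trace_mul_sub_trace_mul_transpose_swap A B C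
  rw [hswap₁, hswap₂] at hleB
  rcases min_cases (matOpNorm A / A.trace) (matOpNorm B / B.trace) with ⟨h, -⟩ | ⟨h, -⟩
  · rw [h, div_mul_eq_mul_div, le_div_iff₀' hAtr]
    exact hleA
  · rw [h, div_mul_eq_mul_div, le_div_iff₀' hBtr]
    exact hleB

theorem trace_mul_sub_trace_mul_transpose_eq_min_of_eq_smul_one_left {a c : ℝ}
    (hA : A = a • 1) (hC : C = c • 1) (hAtr : 0 < A.trace) (hBtr : 0 < B.trace) :
    (A * B).trace - (C * Cᵀ).trace =
      min (matOpNorm A / A.trace) (matOpNorm B / B.trace) *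
        (A.trace * B.trace - C.trace ^ 2) := by
  have htr : ∀ r : ℝ, (r • (1 : Matrix (Fin d) (Fin d) ℝ)).trace = r * d := by simp
  have htrA : A.trace = a * d := by rw [hA, htr]
  rw [htrA] at hAtr
  have : NeZero d := ⟨by rintro rfl; simp at hAtr⟩
  have hd : (0 : ℝ) < d := Nat.cast_pos.2 (NeZero.pos d)
  have ha : 0 < a := pos_of_mul_pos_left hAtr hd.le
  have hmin : min (matOpNorm A / A.trace) (matOpNorm B / B.trace) = 1 / d := by
    rw [hA, matOpNorm_smul_one ha.le, ← hA, htrA, div_mul_cancel_left₀ ha.ne', one_div]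
    refine min_eq_left ?_
    rw [inv_eq_one_div, div_le_div_iff₀ hd hBtr]
    linarith [trace_le_mul_matOpNorm B]
  have htrAB : (A * B).trace = a * B.trace := by rw [hA, smul_mul, one_mul, trace_smul, smul_eq_mul]
  have htrCC : (C * Cᵀ).trace = c ^ 2 * d := by
    rw [hC, transpose_smul, transpose_one, smul_mul, one_mul, smul_smul, htr, sq]
  rw [hmin, htrAB, htrCC, htrA, hC, htr]
  field_simp

theorem trace_mul_sub_trace_mul_transpose_eq_min_of_eq_smul_one_right {b c : ℝ}
    (hB : B = b • 1) (hC : C = c • 1) (hAtr : 0 < A.trace) (hBtr : 0 < B.trace) :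
    (A * B).trace - (C * Cᵀ).trace =
      min (matOpNorm A / A.trace) (matOpNorm B / B.trace) *
        (A.trace * B.trace - C.trace ^ 2) := by
  have h := trace_mul_sub_trace_mul_transpose_eq_min_of_eq_smul_one_left (C := Cᵀ) hB
    (by rw [hC, transpose_smul, transpose_one]) hBtr hAtr
  obtain ⟨hswap₁, hswap₂⟩ := trace_mul_sub_trace_mul_transpose_swap A B C
  rwa [hswap₁, hswap₂, min_comm] at h

end TraceInequality

theorem stmt3_general {d : ℕ} {Ω : Type*} [MeasurableSpace Ω] (μ : Measure Ω)
    (U V : Ω → EuclideanSpace ℝ (Fin d))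
    (hUm : Measurable U) (hVm : Measurable V)
    (hU2 : Integrable (fun ω => ‖U ω‖ ^ 2) μ) (hV2 : Integrable (fun ω => ‖V ω‖ ^ 2) μ)
    (hUtr : 0 < (covMatrix μ U U).trace) (hVtr : 0 < (covMatrix μ V V).trace) :
    ((covMatrix μ U U * covMatrix μ V V).trace - (covMatrix μ U V * covMatrix μ V U).trace ≤
      min (matOpNorm (covMatrix μ U U) / (covMatrix μ U U).trace)
          (matOpNorm (covMatrix μ V V) / (covMatrix μ V V).trace) *
        ((covMatrix μ U U).trace * (covMatrix μ V V).trace - (covMatrix μ U V).trace ^ 2))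
    ∧ (((∃ a : ℝ, covMatrix μ U U = a • (1 : Matrix (Fin d) (Fin d) ℝ)) ∧
        (∃ b : ℝ, covMatrix μ U V = b • (1 : Matrix (Fin d) (Fin d) ℝ))) →
      (covMatrix μ U U * covMatrix μ V V).trace - (covMatrix μ U V * covMatrix μ V U).trace =
        min (matOpNorm (covMatrix μ U U) / (covMatrix μ U U).trace)
            (matOpNorm (covMatrix μ V V) / (covMatrix μ V V).trace) *
          ((covMatrix μ U U).trace * (covMatrix μ V V).trace - (covMatrix μ U V).trace ^ 2))
    ∧ (((∃ a : ℝ, covMatrix μ V V = a • (1 : Matrix (Fin d) (Fin d) ℝ)) ∧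
        (∃ b : ℝ, covMatrix μ U V = b • (1 : Matrix (Fin d) (Fin d) ℝ))) →
      (covMatrix μ U U * covMatrix μ V V).trace - (covMatrix μ U V * covMatrix μ V U).trace =
        min (matOpNorm (covMatrix μ U U) / (covMatrix μ U U).trace)
            (matOpNorm (covMatrix μ V V) / (covMatrix μ V V).trace) *
          ((covMatrix μ U U).trace * (covMatrix μ V V).trace - (covMatrix μ U V).trace ^ 2)) := by
  have hU : MemLp U 2 μ := (memLp_two_iff_integrable_sq_norm hUm.aestronglyMeasurable).2 hU2
  have hV : MemLp V 2 μ := (memLp_two_iff_integrable_sq_norm hVm.aestronglyMeasurable).2 hV2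
  rw [← covMatrix_transpose U V]
  refine ⟨trace_mul_sub_trace_mul_transpose_le_min (covMatrix_posSemidef hU)
    (covMatrix_posSemidef hV) (fun x => sq_dotProduct_covMatrix_mulVec_le hU hV x x) hUtr hVtr,
    ?_, ?_⟩
  · rintro ⟨⟨a, hA⟩, ⟨c, hC⟩⟩
    exact trace_mul_sub_trace_mul_transpose_eq_min_of_eq_smul_one_left hA hC hUtr hVtr
  · rintro ⟨⟨b, hB⟩, ⟨c, hC⟩⟩
    exact trace_mul_sub_trace_mul_transpose_eq_min_of_eq_smul_one_right hB hC hUtr hVtr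

/-- For centered square-integrable random vectors `U, V` in `ℝ^d` with
positive-trace covariances:
`Tr(C_{U,U}C_{V,V}) − Tr(C_{U,V}C_{V,U})
  ≤ min(‖C_{U,U}‖/Tr C_{U,U}, ‖C_{V,V}‖/Tr C_{V,V}) · (Tr C_{U,U} · Tr C_{V,V} − (Tr C_{U,V})²)`,
with equality when `C_{U,U}` and `C_{U,V}` (resp. `C_{V,V}` and `C_{U,V}`) are scalar
multiples of the identity. -/
theorem stmt3 {d : ℕ} {Ω : Type*} [MeasurableSpace Ω] (μ : Measure Ω)
    [IsProbabilityMeasure μ]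
    (U V : Ω → EuclideanSpace ℝ (Fin d))
    (hUm : Measurable U) (hVm : Measurable V)
    (hUcen : ∫ ω, U ω ∂μ = 0) (hVcen : ∫ ω, V ω ∂μ = 0)
    (hU2 : Integrable (fun ω => ‖U ω‖ ^ 2) μ) (hV2 : Integrable (fun ω => ‖V ω‖ ^ 2) μ)
    (hUtr : 0 < (covMatrix μ U U).trace) (hVtr : 0 < (covMatrix μ V V).trace) :
    ((covMatrix μ U U * covMatrix μ V V).trace - (covMatrix μ U V * covMatrix μ V U).trace ≤
      min (matOpNorm (covMatrix μ U U) / (covMatrix μ U U).trace)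
          (matOpNorm (covMatrix μ V V) / (covMatrix μ V V).trace) *
        ((covMatrix μ U U).trace * (covMatrix μ V V).trace - (covMatrix μ U V).trace ^ 2))
    ∧ (((∃ a : ℝ, covMatrix μ U U = a • (1 : Matrix (Fin d) (Fin d) ℝ)) ∧
        (∃ b : ℝ, covMatrix μ U V = b • (1 : Matrix (Fin d) (Fin d) ℝ))) →
      (covMatrix μ U U * covMatrix μ V V).trace - (covMatrix μ U V * covMatrix μ V U).trace =
        min (matOpNorm (covMatrix μ U U) / (covMatrix μ U U).trace)
            (matOpNorm (covMatrix μ V V) / (covMatrix μ V V).trace) *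
          ((covMatrix μ U U).trace * (covMatrix μ V V).trace - (covMatrix μ U V).trace ^ 2))
    ∧ (((∃ a : ℝ, covMatrix μ V V = a • (1 : Matrix (Fin d) (Fin d) ℝ)) ∧
        (∃ b : ℝ, covMatrix μ U V = b • (1 : Matrix (Fin d) (Fin d) ℝ))) →
      (covMatrix μ U U * covMatrix μ V V).trace - (covMatrix μ U V * covMatrix μ V U).trace =
        min (matOpNorm (covMatrix μ U U) / (covMatrix μ U U).trace)
            (matOpNorm (covMatrix μ V V) / (covMatrix μ V V).trace) *
          ((covMatrix μ U U).trace * (covMatrix μ V V).trace - (covMatrix μ U V).trace ^ 2)) :=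
  stmt3_general μ U V hUm hVm hU2 hV2 hUtr hVtr
end

section
/- Let d ≥ 2 and let (U,V) be a pair of random vectors in ℝ^d with 𝔼U = 𝔼V = 0, 𝔼|U|² = 𝔼|V|² = 1, 𝔼|U|⁴ < ∞, 𝔼|V|⁴ < ∞, and suppose the isotropy condition 𝔼(U⊗U) = (1/d)·Id holds. Let (U_*,V_*) be an independent copy of (U,V). Then f(𝔼|U−V|²) ≤ (d/(d−1)) · 𝔼( |U−U_*|²|V−V_*|² − ((U−U_*)·(V−V_*))² ). -/
/-!
Write `A = 𝔼(U⊗U)`, `B = 𝔼(V⊗V)`, `C = 𝔼(U⊗V)` and `t = tr C = 𝔼(U·V)`, so that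
`𝔼|U−V|² = 2 − 2t` and `f(𝔼|U−V|²) = 1 − t²`. Expanding the quartic `|X|²|Y|² − (X·Y)²` at
`X = U − U_*`, `Y = V − V_*` and factoring expectations by independence (terms of odd degree in
one copy vanish because `U` and `V` are centered) gives
`2 𝔼(|U|²|V|² − (U·V)²) + 2 (tr A tr B − ⟨A, B⟩) + 2 (2|C|² − t² − ⟨C, Cᵀ⟩)`.
The first term is nonnegative by Cauchy–Schwarz, isotropy turns the second into `2(1 − 1/d)`,
and `⟨C, Cᵀ⟩ ≤ |C|²`, `t² ≤ d |C|²` bound the third below by `−2(1 − 1/d) t²`. So the right-hand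
side is at least `2(1 − t²)`; being also nonnegative, it dominates `1 − t²`.
-/

open MeasureTheory ProbabilityTheory
open scoped RealInnerProductSpace

open Finset
open scoped ENNReal

theorem MeasureTheory.MemLp.integrable_finset_prod {Ω ι : Type*} [MeasurableSpace Ω]
    {μ : Measure Ω} [IsFiniteMeasure μ] {s : Finset ι} {f : ι → Ω → ℝ} {p : ℝ≥0∞}
    (hf : ∀ i ∈ s, MemLp (f i) p μ) (hs : (#s : ℝ≥0∞) ≤ p) :
    Integrable (fun ω => ∏ i ∈ s, f i ω) μ := by
  have h := MemLp.prod hf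
  simp only [sum_const, nsmul_eq_mul] at h
  refine (memLp_one_iff_integrable.1 (h.mono_exponent ?_)).congr (ae_of_all _ fun ω => ?_)
  · rw [ENNReal.one_le_inv, ← div_eq_mul_inv]
    exact ENNReal.div_le_of_le_mul (by simpa using hs)
  · simp [Finset.prod_apply]

theorem MeasureTheory.memLp_of_integrable_norm_pow {Ω E : Type*} [MeasurableSpace Ω]
    {μ : Measure Ω} [NormedAddCommGroup E] {f : Ω → E} (hf : AEStronglyMeasurable f μ) {n : ℕ}
    (hn : n ≠ 0) (h : Integrable (fun ω => ‖f ω‖ ^ n) μ) : MemLp f n μ :=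
  (integrable_norm_rpow_iff hf (by exact_mod_cast hn) (by simp)).1 (by simpa using h)

theorem MeasureTheory.MemLp.integrable_mul_mul_mul {Ω : Type*} [MeasurableSpace Ω]
    {μ : Measure Ω} [IsFiniteMeasure μ] {f g h k : Ω → ℝ} (hf : MemLp f 4 μ) (hg : MemLp g 4 μ)
    (hh : MemLp h 4 μ) (hk : MemLp k 4 μ) :
    Integrable (fun ω => f ω * g ω * h ω * k ω) μ := by
  have hfin : ∀ i ∈ (univ : Finset (Fin 4)), MemLp (![f, g, h, k] i) 4 μ := by
    intro i _; fin_cases i <;> assumption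
  simpa [Fin.prod_univ_four, mul_assoc] using MemLp.integrable_finset_prod hfin (by simp)

/-- Only the three pairings of `{0, 1, 2, 3}` survive, each twice (from `t` and its complement). -/
theorem sum_powerset_univ_fin_four_of_singleton_eq_zero {R : Type*} [CommRing R]
    (m : Finset (Fin 4) → R) (h0 : m ∅ = 1) (h1 : ∀ i, m {i} = 0) :
    ∑ t ∈ (univ : Finset (Fin 4)).powerset, (-1) ^ #t * m (univ \ t) * m t =
      2 * m univ + 2 * (m {0, 1} * m {2, 3} + m {0, 2} * m {1, 3} + m {0, 3} * m {1, 2}) := by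
  rw [show (univ : Finset (Fin 4)) = insert 0 (insert 1 (insert 2 (insert 3 ∅))) by decide]
  simp (disch := decide) only [sum_powerset_insert, powerset_empty, sum_singleton,
    insert_sdiff_of_mem, insert_sdiff_of_notMem, empty_sdiff, card_insert_of_notMem, card_empty]
  simp only [LawfulSingleton.insert_empty_eq, h0, h1]
  ring

section IndependentCopy

variable {Ω E ι : Type*} [MeasurableSpace Ω] [MeasurableSpace E] {μ : Measure Ω} {Z Z' : Ω → E}

theorem integral_comp_mul_comp_of_identDistrib (hZ : IndepFun Z Z' μ)
    (hZZ' : IdentDistrib Z Z' μ μ) {g h : E → ℝ} (hg : Measurable g) (hh : Measurable h) :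
    ∫ ω, g (Z ω) * h (Z' ω) ∂μ = (∫ ω, g (Z ω) ∂μ) * ∫ ω, h (Z ω) ∂μ := by
  rw [hZ.integral_fun_comp_mul_comp hZZ'.aemeasurable_fst hZZ'.aemeasurable_snd
    hg.aestronglyMeasurable hh.aestronglyMeasurable]
  exact congrArg _ (hZZ'.comp hh).integral_eq.symm

theorem integral_prod_sub_of_identDistrib [IsFiniteMeasure μ] [DecidableEq ι]
    (hZ : IndepFun Z Z' μ) (hZZ' : IdentDistrib Z Z' μ μ) {s : Finset ι} {w : ι → E → ℝ}
    (hw : ∀ i, Measurable (w i)) (hwZ : ∀ i ∈ s, MemLp (fun ω => w i (Z ω)) #s μ) :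
    ∫ ω, ∏ i ∈ s, (w i (Z ω) - w i (Z' ω)) ∂μ =
      ∑ t ∈ s.powerset, (-1) ^ #t * (∫ ω, ∏ i ∈ s \ t, w i (Z ω) ∂μ) *
        ∫ ω, ∏ i ∈ t, w i (Z ω) ∂μ := by
  have hmeas (t : Finset ι) : Measurable fun z => ∏ i ∈ t, w i z :=
    Finset.measurable_prod t fun i _ => hw i
  have hint {t : Finset ι} (ht : t ⊆ s) : Integrable (fun ω => ∏ i ∈ t, w i (Z ω)) μ :=
    MemLp.integrable_finset_prod (fun i hi => hwZ i (ht hi)) (by exact_mod_cast card_le_card ht)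
  simp_rw [prod_sub, mul_assoc]
  rw [integral_finsetSum]
  · refine sum_congr rfl fun t _ => ?_
    rw [integral_const_mul, integral_comp_mul_comp_of_identDistrib hZ hZZ' (hmeas _) (hmeas _)]
  · intro t ht
    refine ((hZ.comp (hmeas _) (hmeas _)).integrable_mul (hint sdiff_subset) ?_).const_mul _
    exact (hZZ'.comp (hmeas t)).integrable_snd (hint (mem_powerset.1 ht))

theorem integral_prod_four_sub_of_identDistrib [IsProbabilityMeasure μ] (hZ : IndepFun Z Z' μ)
    (hZZ' : IdentDistrib Z Z' μ μ) {a b c e : E → ℝ} (ha : Measurable a) (hb : Measurable b)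
    (hc : Measurable c) (he : Measurable e) (haZ : MemLp (fun ω => a (Z ω)) 4 μ)
    (hbZ : MemLp (fun ω => b (Z ω)) 4 μ) (hcZ : MemLp (fun ω => c (Z ω)) 4 μ)
    (heZ : MemLp (fun ω => e (Z ω)) 4 μ) (ha0 : ∫ ω, a (Z ω) ∂μ = 0) (hb0 : ∫ ω, b (Z ω) ∂μ = 0)
    (hc0 : ∫ ω, c (Z ω) ∂μ = 0) (he0 : ∫ ω, e (Z ω) ∂μ = 0) :
    ∫ ω, (a (Z ω) - a (Z' ω)) * (b (Z ω) - b (Z' ω)) * (c (Z ω) - c (Z' ω)) *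
        (e (Z ω) - e (Z' ω)) ∂μ =
      2 * ∫ ω, a (Z ω) * b (Z ω) * c (Z ω) * e (Z ω) ∂μ +
        2 * ((∫ ω, a (Z ω) * b (Z ω) ∂μ) * (∫ ω, c (Z ω) * e (Z ω) ∂μ) +
          (∫ ω, a (Z ω) * c (Z ω) ∂μ) * (∫ ω, b (Z ω) * e (Z ω) ∂μ) +
          (∫ ω, a (Z ω) * e (Z ω) ∂μ) * (∫ ω, b (Z ω) * c (Z ω) ∂μ)) := by
  set w : Fin 4 → E → ℝ := ![a, b, c, e]
  have hw : ∀ i, Measurable (w i) := by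
    intro i; fin_cases i <;> assumption
  have hwZ : ∀ i ∈ (univ : Finset (Fin 4)),
      MemLp (fun ω => w i (Z ω)) #(univ : Finset (Fin 4)) μ := by
    intro i _; fin_cases i <;> assumption
  have hexpand := integral_prod_sub_of_identDistrib hZ hZZ' hw hwZ
  rw [sum_powerset_univ_fin_four_of_singleton_eq_zero (fun t => ∫ ω, ∏ i ∈ t, w i (Z ω) ∂μ)
    (by simp) fun i => by fin_cases i <;> simpa] at hexpand
  simpa [Fin.prod_univ_four, w, mul_assoc] using hexpand

end IndependentCopy

theorem EuclideanSpace.real_inner_eq_sum {ι : Type*} [Fintype ι] (x y : EuclideanSpace ℝ ι) :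
    ⟪x, y⟫ = ∑ i, x i * y i := by
  simp [PiLp.inner_apply, mul_comm]

theorem EuclideanSpace.norm_sq_mul_norm_sq_sub_inner_sq {ι : Type*} [Fintype ι]
    (x y : EuclideanSpace ℝ ι) :
    ‖x‖ ^ 2 * ‖y‖ ^ 2 - ⟪x, y⟫ ^ 2 = ∑ i, ∑ j, (x i * x i * y j * y j - x i * x j * y i * y j) := by
  rw [EuclideanSpace.real_norm_sq_eq, EuclideanSpace.real_norm_sq_eq,
    EuclideanSpace.real_inner_eq_sum, sq, sum_mul_sum, sum_mul_sum, ← sum_sub_distrib]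
  refine sum_congr rfl fun i _ => ?_
  rw [← sum_sub_distrib]
  exact sum_congr rfl fun j _ => by ring

theorem Matrix.sum_mul_swap_le_sum_sq {n : Type*} [Fintype n] (C : Matrix n n ℝ) :
    ∑ i, ∑ j, C i j * C j i ≤ ∑ i, ∑ j, C i j ^ 2 := by
  calc ∑ i, ∑ j, C i j * C j i ≤ ∑ i, ∑ j, (C i j ^ 2 + C j i ^ 2) / 2 :=
        sum_le_sum fun i _ => sum_le_sum fun j _ => by nlinarith [sq_nonneg (C i j - C j i)]
    _ = ∑ i, ∑ j, C i j ^ 2 := by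
        simp only [← sum_div, sum_add_distrib]
        rw [sum_comm (f := fun i j => C j i ^ 2)]
        ring

theorem Matrix.trace_sq_le_card_mul_sum_sq {n : Type*} [Fintype n] (C : Matrix n n ℝ) :
    C.trace ^ 2 ≤ Fintype.card n * ∑ i, ∑ j, C i j ^ 2 := by
  calc C.trace ^ 2 ≤ Fintype.card n * ∑ i, C i i ^ 2 := by
        simpa [Matrix.trace] using sq_sum_le_card_mul_sum_sq (s := univ) (f := fun i => C i i)
    _ ≤ Fintype.card n * ∑ i, ∑ j, C i j ^ 2 := by
        gcongr with i
        exact single_le_sum (f := fun j => C i j ^ 2) (fun j _ => sq_nonneg _) (mem_univ i)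

theorem Matrix.trace_smul_one_mul_trace_sub {n : Type*} [Fintype n] [DecidableEq n] (c : ℝ)
    (B : Matrix n n ℝ) :
    (c • 1 : Matrix n n ℝ).trace * B.trace - ∑ i, ∑ j, (c • 1 : Matrix n n ℝ) i j * B i j =
      c * (Fintype.card n - 1) * B.trace := by
  simp only [trace, diag_apply, smul_apply, one_apply, smul_eq_mul, mul_ite, mul_one, mul_zero,
    ite_mul, zero_mul, sum_ite_eq, mem_univ, if_true, sum_const, card_univ, nsmul_eq_mul, mul_sum,
    ← sum_sub_distrib]
  ring_nf

section RandomVectors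

variable {Ω : Type*} [MeasurableSpace Ω] {μ : Measure Ω}

theorem integral_norm_sq_mul_norm_sq_sub_inner_sq_nonneg {E : Type*} [NormedAddCommGroup E]
    [InnerProductSpace ℝ E] (X Y : Ω → E) :
    0 ≤ ∫ ω, (‖X ω‖ ^ 2 * ‖Y ω‖ ^ 2 - ⟪X ω, Y ω⟫ ^ 2) ∂μ := by
  refine integral_nonneg fun ω => sub_nonneg.2 ?_
  rw [← mul_pow, ← sq_abs]
  exact pow_le_pow_left₀ (abs_nonneg _) (abs_real_inner_le_norm _ _) 2

theorem MeasureTheory.MemLp.integrable_inner {E : Type*} [NormedAddCommGroup E]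
    [InnerProductSpace ℝ E] {X Y : Ω → E} (hX : MemLp X 2 μ) (hY : MemLp Y 2 μ) :
    Integrable (fun ω => ⟪X ω, Y ω⟫) μ :=
  (hX.norm.integrable_mul hY.norm).mono (hX.1.inner hY.1) (ae_of_all _ fun ω => by
    simpa using norm_inner_le_norm (𝕜 := ℝ) (X ω) (Y ω))

theorem integral_norm_sub_sq {E : Type*} [NormedAddCommGroup E] [InnerProductSpace ℝ E]
    [IsFiniteMeasure μ] {X Y : Ω → E} (hX : MemLp X 2 μ) (hY : MemLp Y 2 μ) :
    ∫ ω, ‖X ω - Y ω‖ ^ 2 ∂μ =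
      (∫ ω, ‖X ω‖ ^ 2 ∂μ) - 2 * (∫ ω, ⟪X ω, Y ω⟫ ∂μ) + ∫ ω, ‖Y ω‖ ^ 2 ∂μ := by
  simp_rw [norm_sub_sq_real]
  have hX2 : Integrable (fun ω => ‖X ω‖ ^ 2) μ := hX.integrable_norm_pow'
  have hXY : Integrable (fun ω => 2 * ⟪X ω, Y ω⟫) μ := (hX.integrable_inner hY).const_mul 2
  rw [integral_add (f := fun ω => ‖X ω‖ ^ 2 - 2 * ⟪X ω, Y ω⟫) (hX2.sub hXY)
    hY.integrable_norm_pow', integral_sub hX2 hXY, integral_const_mul]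

theorem integral_norm_sq_mul_norm_sq_sub_inner_sq [IsFiniteMeasure μ] {ι : Type*} [Fintype ι]
    {X Y : Ω → EuclideanSpace ℝ ι} (hX : ∀ i, MemLp (fun ω => X ω i) 4 μ)
    (hY : ∀ i, MemLp (fun ω => Y ω i) 4 μ) :
    ∫ ω, (‖X ω‖ ^ 2 * ‖Y ω‖ ^ 2 - ⟪X ω, Y ω⟫ ^ 2) ∂μ =
      ∑ i, ∑ j, ((∫ ω, X ω i * X ω i * Y ω j * Y ω j ∂μ) -
        ∫ ω, X ω i * X ω j * Y ω i * Y ω j ∂μ) := by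
  have hint (i k j l : ι) : Integrable (fun ω => X ω i * X ω k * Y ω j * Y ω l) μ :=
    (hX i).integrable_mul_mul_mul (hX k) (hY j) (hY l)
  have hterm (i j : ι) : Integrable (fun ω => X ω i * X ω i * Y ω j * Y ω j -
      X ω i * X ω j * Y ω i * Y ω j) μ := (hint i i j j).sub (hint i j i j)
  simp_rw [EuclideanSpace.norm_sq_mul_norm_sq_sub_inner_sq]
  rw [integral_finsetSum _ fun i _ => integrable_finsetSum _ fun j _ => hterm i j]
  refine sum_congr rfl fun i _ => ?_
  rw [integral_finsetSum _ fun j _ => hterm i j]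
  exact sum_congr rfl fun j _ => integral_sub (hint i i j j) (hint i j i j)

variable {d : ℕ}

theorem integral_inner_eq_trace_covMatrix {X Y : Ω → EuclideanSpace ℝ (Fin d)}
    (hX : ∀ i, MemLp (fun ω => X ω i) 2 μ) (hY : ∀ i, MemLp (fun ω => Y ω i) 2 μ) :
    ∫ ω, ⟪X ω, Y ω⟫ ∂μ = (covMatrix μ X Y).trace := by
  simp_rw [EuclideanSpace.real_inner_eq_sum]
  exact integral_finsetSum _ fun i _ => (hX i).integrable_mul (hY i)

theorem integral_norm_sq_mul_norm_sq_sub_inner_sq_sub_copy [IsProbabilityMeasure μ]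
    {U V U' V' : Ω → EuclideanSpace ℝ (Fin d)}
    (hind : IndepFun (fun ω => (U ω, V ω)) (fun ω => (U' ω, V' ω)) μ)
    (hcopy : IdentDistrib (fun ω => (U ω, V ω)) (fun ω => (U' ω, V' ω)) μ μ)
    (hU : ∀ i, MemLp (fun ω => U ω i) 4 μ) (hV : ∀ i, MemLp (fun ω => V ω i) 4 μ)
    (hU0 : ∀ i, ∫ ω, U ω i ∂μ = 0) (hV0 : ∀ i, ∫ ω, V ω i ∂μ = 0) :
    ∫ ω, (‖U ω - U' ω‖ ^ 2 * ‖V ω - V' ω‖ ^ 2 - ⟪U ω - U' ω, V ω - V' ω⟫ ^ 2) ∂μ =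
      2 * ∫ ω, (‖U ω‖ ^ 2 * ‖V ω‖ ^ 2 - ⟪U ω, V ω⟫ ^ 2) ∂μ +
        2 * ((covMatrix μ U U).trace * (covMatrix μ V V).trace -
          ∑ i, ∑ j, covMatrix μ U U i j * covMatrix μ V V i j) +
        2 * (2 * ∑ i, ∑ j, covMatrix μ U V i j ^ 2 - (covMatrix μ U V).trace ^ 2 -
          ∑ i, ∑ j, covMatrix μ U V i j * covMatrix μ U V j i) := by
  have hfst (i : Fin d) : Measurable fun z : EuclideanSpace ℝ (Fin d) × EuclideanSpace ℝ (Fin d) =>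
      z.1 i := by fun_prop
  have hsnd (i : Fin d) : Measurable fun z : EuclideanSpace ℝ (Fin d) × EuclideanSpace ℝ (Fin d) =>
      z.2 i := by fun_prop
  have hU' (i : Fin d) : MemLp (fun ω => U' ω i) 4 μ := (hcopy.comp (hfst i)).memLp_snd (hU i)
  have hV' (i : Fin d) : MemLp (fun ω => V' ω i) 4 μ := (hcopy.comp (hsnd i)).memLp_snd (hV i)
  have hfour (i k j l : Fin d) :
      ∫ ω, (U ω i - U' ω i) * (U ω k - U' ω k) * (V ω j - V' ω j) * (V ω l - V' ω l) ∂μ =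
        2 * ∫ ω, U ω i * U ω k * V ω j * V ω l ∂μ +
          2 * ((∫ ω, U ω i * U ω k ∂μ) * (∫ ω, V ω j * V ω l ∂μ) +
            (∫ ω, U ω i * V ω j ∂μ) * (∫ ω, U ω k * V ω l ∂μ) +
            (∫ ω, U ω i * V ω l ∂μ) * (∫ ω, U ω k * V ω j ∂μ)) :=
    integral_prod_four_sub_of_identDistrib hind hcopy (hfst i) (hfst k) (hsnd j) (hsnd l)
      (hU i) (hU k) (hV j) (hV l) (hU0 i) (hU0 k) (hV0 j) (hV0 l)
  rw [integral_norm_sq_mul_norm_sq_sub_inner_sq (fun i => (hU i).sub (hU' i))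
    (fun i => (hV i).sub (hV' i)), integral_norm_sq_mul_norm_sq_sub_inner_sq hU hV]
  simp only [Matrix.trace, sq]
  rw [sum_mul_sum, sum_mul_sum]
  simp only [PiLp.sub_apply, hfour, covMatrix, Matrix.diag, Matrix.of_apply, mul_sum,
    ← sum_sub_distrib, ← sum_add_distrib]
  refine sum_congr rfl fun i _ => sum_congr rfl fun j _ => ?_
  ring

end RandomVectors

theorem one_sub_sq_le_div_mul {d t Q F G : ℝ} (hd : 1 < d) (hQ : 0 ≤ Q) (hGF : G ≤ F)
    (htF : t ^ 2 ≤ d * F) (hS : 0 ≤ 2 * Q + 2 * (d⁻¹ * (d - 1)) + 2 * (2 * F - t ^ 2 - G)) :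
    1 - t ^ 2 ≤ d / (d - 1) * (2 * Q + 2 * (d⁻¹ * (d - 1)) + 2 * (2 * F - t ^ 2 - G)) := by
  set S := 2 * Q + 2 * (d⁻¹ * (d - 1)) + 2 * (2 * F - t ^ 2 - G)
  have hd0 : (0 : ℝ) ≤ d := by linarith
  have hd1 : 0 < d - 1 := by linarith
  have hdS : d * S = 2 * (d * Q) + 2 * (d - 1) + 2 * (2 * (d * F) - d * t ^ 2 - d * G) := by
    simp only [S]; field_simp
  have hlower : 2 * (1 - t ^ 2) ≤ d / (d - 1) * S := by
    rw [div_mul_eq_mul_div, le_div_iff₀ hd1, hdS]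
    nlinarith [mul_nonneg hd0 hQ, mul_le_mul_of_nonneg_left hGF hd0]
  have hnonneg : 0 ≤ d / (d - 1) * S := mul_nonneg (div_nonneg hd0 hd1.le) hS
  rcases le_total 0 (1 - t ^ 2) with h | h <;> linarith

/-- For `d ≥ 2` and a centered, normalized pair `(U,V)` of random vectors
in `ℝ^d` with finite fourth moments, satisfying the isotropy condition `𝔼(U⊗U) = (1/d)·Id`,
and `(U_*,V_*)` an independent copy of `(U,V)`:
`f(𝔼|U−V|²) ≤ (d/(d−1)) · 𝔼(|U−U_*|²|V−V_*|² − ((U−U_*)·(V−V_*))²)`, `f x = x - x²/4`. -/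
theorem stmt5 {d : ℕ} (hd : 2 ≤ d) {Ω : Type*} [MeasurableSpace Ω] (μ : Measure Ω)
    [IsProbabilityMeasure μ]
    (U V Us Vs : Ω → EuclideanSpace ℝ (Fin d))
    (hUm : Measurable U) (hVm : Measurable V) (hUsm : Measurable Us) (hVsm : Measurable Vs)
    (hUcen : ∫ ω, U ω ∂μ = 0) (hVcen : ∫ ω, V ω ∂μ = 0)
    (hUnorm : ∫ ω, ‖U ω‖ ^ 2 ∂μ = 1) (hVnorm : ∫ ω, ‖V ω‖ ^ 2 ∂μ = 1)
    (hU4 : Integrable (fun ω => ‖U ω‖ ^ 4) μ) (hV4 : Integrable (fun ω => ‖V ω‖ ^ 4) μ)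
    (hiso : covMatrix μ U U = ((d : ℝ)⁻¹) • (1 : Matrix (Fin d) (Fin d) ℝ))
    (hindep : IndepFun (fun ω => (U ω, V ω)) (fun ω => (Us ω, Vs ω)) μ)
    (hcopy : Measure.map (fun ω => (U ω, V ω)) μ = Measure.map (fun ω => (Us ω, Vs ω)) μ) :
    (∫ ω, ‖U ω - V ω‖ ^ 2 ∂μ) - (∫ ω, ‖U ω - V ω‖ ^ 2 ∂μ) ^ 2 / 4 ≤
      ((d : ℝ) / ((d : ℝ) - 1)) *
        ∫ ω, (‖U ω - Us ω‖ ^ 2 * ‖V ω - Vs ω‖ ^ 2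
          - ⟪U ω - Us ω, V ω - Vs ω⟫ ^ 2) ∂μ := by
  have hU := memLp_of_integrable_norm_pow hUm.aestronglyMeasurable four_ne_zero hU4
  have hV := memLp_of_integrable_norm_pow hVm.aestronglyMeasurable four_ne_zero hV4
  have hU2 : MemLp U 2 μ := hU.mono_exponent (by norm_num)
  have hV2 : MemLp V 2 μ := hV.mono_exponent (by norm_num)
  have hU0 (i : Fin d) : ∫ ω, U ω i ∂μ = 0 := by
    rw [← eval_integral_piLp (hU2.integrable one_le_two).eval_piLp, hUcen]; rfl
  have hV0 (i : Fin d) : ∫ ω, V ω i ∂μ = 0 := by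
    rw [← eval_integral_piLp (hV2.integrable one_le_two).eval_piLp, hVcen]; rfl
  have htrB : (covMatrix μ V V).trace = 1 := by
    rw [← integral_inner_eq_trace_covMatrix hV2.eval_piLp hV2.eval_piLp, ← hVnorm]
    simp_rw [real_inner_self_eq_norm_sq]
  have hR0 := integral_norm_sq_mul_norm_sq_sub_inner_sq_nonneg (μ := μ)
    (fun ω => U ω - Us ω) (fun ω => V ω - Vs ω)
  rw [integral_norm_sq_mul_norm_sq_sub_inner_sq_sub_copy hindep
    ⟨(hUm.prodMk hVm).aemeasurable, (hUsm.prodMk hVsm).aemeasurable, hcopy⟩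
    hU.eval_piLp hV.eval_piLp hU0 hV0, hiso, Matrix.trace_smul_one_mul_trace_sub, htrB,
    Fintype.card_fin, mul_one] at hR0 ⊢
  rw [integral_norm_sub_sq hU2 hV2, hUnorm, hVnorm,
    integral_inner_eq_trace_covMatrix hU2.eval_piLp hV2.eval_piLp]
  have hC := (covMatrix μ U V).trace_sq_le_card_mul_sum_sq
  rw [Fintype.card_fin] at hC
  calc _ = 1 - (covMatrix μ U V).trace ^ 2 := by ring
    _ ≤ _ := one_sub_sq_le_div_mul (by exact_mod_cast hd)
      (integral_norm_sq_mul_norm_sq_sub_inner_sq_nonneg U V)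
      (covMatrix μ U V).sum_mul_swap_le_sum_sq hC hR0
end

section
/- Let d ≥ 1 and let n_u, m_u, n_v, m_v, l be unit vectors in ℝ^d satisfying the frame hypothesis: n_u ⟂ m_u, n_v ⟂ m_v, l is orthogonal to each of n_u, m_u, n_v, m_v, and n_u·n_v = m_u·m_v, n_u·m_v = −m_u·n_v. For θ, φ ∈ ℝ define n'_u := cosθ·n_u + sinθ cosφ·m_u + sinθ sinφ·l and n'_v := cosθ·n_v + sinθ cosφ·m_v + sinθ sinφ·l. Then n'_u and n'_v are unit vectors, and n'_u·n'_v − n_u·n_v = −sin²θ·sin²φ·(n_u·n_v − 1); equivalently, |n'_u − n'_v|² − |n_u − n_v|² = −sin²θ·sin²φ·|n_u − n_v|². In particular |n'_u − n'_v| ≤ |n_u − n_v|. -/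
open Real
open scoped RealInnerProductSpace

/-!
Expanding `⟪n'_u, n'_v⟫`, the shared component `l` contributes `sin²θ sin²φ`, the cross terms
cancel because `n_u·m_v = −m_u·n_v`, and `n_u·n_v = m_u·m_v` collapses the remaining terms to
`(1 − sin²θ sin²φ) n_u·n_v`. The case `u = v` shows that the new directions are unit vectors,
and for unit vectors `|a − b|² = 2 (1 − a·b)`.
-/

section SphericalStep

variable {E : Type*} [NormedAddCommGroup E] [InnerProductSpace ℝ E]

/-- The direction at polar angle `θ` from `n`, with azimuth `φ` measured in the `(m, l)` plane. -/
noncomputable def sphericalStep (n m l : E) (θ φ : ℝ) : E :=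
  cos θ • n + (sin θ * cos φ) • m + (sin θ * sin φ) • l

theorem inner_sphericalStep_sub_inner {nu mu nv mv l : E} (hl : ‖l‖ = 1)
    (hlnu : ⟪l, nu⟫ = 0) (hlmu : ⟪l, mu⟫ = 0) (hlnv : ⟪l, nv⟫ = 0) (hlmv : ⟪l, mv⟫ = 0)
    (hframe1 : ⟪nu, nv⟫ = ⟪mu, mv⟫) (hframe2 : ⟪nu, mv⟫ = -⟪mu, nv⟫) (θ φ : ℝ) :
    ⟪sphericalStep nu mu l θ φ, sphericalStep nv mv l θ φ⟫ - ⟪nu, nv⟫ =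
      -(sin θ ^ 2 * sin φ ^ 2) * (⟪nu, nv⟫ - 1) := by
  have hll : ⟪l, l⟫ = 1 := by rw [real_inner_self_eq_norm_sq, hl, one_pow]
  simp only [sphericalStep, inner_add_left, inner_add_right, real_inner_smul_left,
    real_inner_smul_right, real_inner_comm l, hll, hlnu, hlmu, hlnv, hlmv]
  linear_combination ⟪nu, nv⟫ * sin_sq_add_cos_sq θ + ⟪nu, nv⟫ * sin θ ^ 2 * sin_sq_add_cos_sq φ
    - sin θ ^ 2 * cos φ ^ 2 * hframe1 + cos θ * sin θ * cos φ * hframe2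

theorem norm_sphericalStep {n m l : E} (hn : ‖n‖ = 1) (hm : ‖m‖ = 1) (hl : ‖l‖ = 1)
    (hnm : ⟪n, m⟫ = 0) (hln : ⟪l, n⟫ = 0) (hlm : ⟪l, m⟫ = 0) (θ φ : ℝ) :
    ‖sphericalStep n m l θ φ‖ = 1 := by
  have hnn : ⟪n, n⟫ = 1 := by rw [real_inner_self_eq_norm_sq, hn, one_pow]
  have hmm : ⟪m, m⟫ = 1 := by rw [real_inner_self_eq_norm_sq, hm, one_pow]
  have hmn : ⟪n, m⟫ = -⟪m, n⟫ := by rw [real_inner_comm n m, hnm, neg_zero]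
  have key := inner_sphericalStep_sub_inner hl hln hlm hln hlm (hnn.trans hmm.symm) hmn θ φ
  rw [hnn, sub_self, mul_zero, sub_eq_zero, real_inner_self_eq_norm_sq] at key
  rwa [pow_eq_one_iff_of_nonneg (norm_nonneg _) two_ne_zero] at key

theorem norm_sub_sq_eq_two_mul_one_sub_inner {a b : E} (ha : ‖a‖ = 1) (hb : ‖b‖ = 1) :
    ‖a - b‖ ^ 2 = 2 * (1 - ⟪a, b⟫) := by
  rw [norm_sub_sq_real, ha, hb]
  ring

end SphericalStep

theorem stmt9_general {d : ℕ}
    (nu mu nv mv l : EuclideanSpace ℝ (Fin d))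
    (hnu : ‖nu‖ = 1) (hmu : ‖mu‖ = 1) (hnv : ‖nv‖ = 1) (hmv : ‖mv‖ = 1) (hl : ‖l‖ = 1)
    (hnumu : ⟪nu, mu⟫ = 0) (hnvmv : ⟪nv, mv⟫ = 0)
    (hlnu : ⟪l, nu⟫ = 0) (hlmu : ⟪l, mu⟫ = 0) (hlnv : ⟪l, nv⟫ = 0) (hlmv : ⟪l, mv⟫ = 0)
    (hframe1 : ⟪nu, nv⟫ = ⟪mu, mv⟫) (hframe2 : ⟪nu, mv⟫ = -⟪mu, nv⟫)
    (θ φ : ℝ)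
    (nu' nv' : EuclideanSpace ℝ (Fin d))
    (hnu' : nu' = cos θ • nu + (sin θ * cos φ) • mu + (sin θ * sin φ) • l)
    (hnv' : nv' = cos θ • nv + (sin θ * cos φ) • mv + (sin θ * sin φ) • l) :
    ‖nu'‖ = 1 ∧ ‖nv'‖ = 1 ∧
    ⟪nu', nv'⟫ - ⟪nu, nv⟫ = -(sin θ ^ 2 * sin φ ^ 2) * (⟪nu, nv⟫ - 1) ∧
    ‖nu' - nv'‖ ^ 2 - ‖nu - nv‖ ^ 2 = -(sin θ ^ 2 * sin φ ^ 2) * ‖nu - nv‖ ^ 2 ∧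
    ‖nu' - nv'‖ ≤ ‖nu - nv‖ := by
  replace hnu' : nu' = sphericalStep nu mu l θ φ := hnu'
  replace hnv' : nv' = sphericalStep nv mv l θ φ := hnv'
  subst hnu' hnv'
  have hnu'1 := norm_sphericalStep hnu hmu hl hnumu hlnu hlmu θ φ
  have hnv'1 := norm_sphericalStep hnv hmv hl hnvmv hlnv hlmv θ φ
  have hinner := inner_sphericalStep_sub_inner hl hlnu hlmu hlnv hlmv hframe1 hframe2 θ φ
  have hdist : ‖sphericalStep nu mu l θ φ - sphericalStep nv mv l θ φ‖ ^ 2 - ‖nu - nv‖ ^ 2 =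
      -(sin θ ^ 2 * sin φ ^ 2) * ‖nu - nv‖ ^ 2 := by
    rw [norm_sub_sq_eq_two_mul_one_sub_inner hnu'1 hnv'1,
      norm_sub_sq_eq_two_mul_one_sub_inner hnu hnv]
    linear_combination -2 * hinner
  refine ⟨hnu'1, hnv'1, hinner, hdist, ?_⟩
  rw [← sq_le_sq₀ (norm_nonneg _) (norm_nonneg _)]
  nlinarith [sq_nonneg (sin θ * sin φ * ‖nu - nv‖)]

/-- Spherical (parallel-transport) coupling of two isotropic steps:
given a coupled frame `(n_u, m_u, n_v, m_v, l)` of unit vectors in `ℝ^d` and angles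
`θ, φ`, the coupled post-collisional directions are unit vectors and satisfy
`n'_u·n'_v − n_u·n_v = −sin²θ sin²φ (n_u·n_v − 1)`, equivalently
`|n'_u − n'_v|² − |n_u − n_v|² = −sin²θ sin²φ |n_u − n_v|²`; in particular the
coupling is contractive. -/
theorem stmt9 {d : ℕ} (hd : 1 ≤ d)
    (nu mu nv mv l : EuclideanSpace ℝ (Fin d))
    (hnu : ‖nu‖ = 1) (hmu : ‖mu‖ = 1) (hnv : ‖nv‖ = 1) (hmv : ‖mv‖ = 1) (hl : ‖l‖ = 1)
    (hnumu : ⟪nu, mu⟫ = 0) (hnvmv : ⟪nv, mv⟫ = 0)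
    (hlnu : ⟪l, nu⟫ = 0) (hlmu : ⟪l, mu⟫ = 0) (hlnv : ⟪l, nv⟫ = 0) (hlmv : ⟪l, mv⟫ = 0)
    (hframe1 : ⟪nu, nv⟫ = ⟪mu, mv⟫) (hframe2 : ⟪nu, mv⟫ = -⟪mu, nv⟫)
    (θ φ : ℝ)
    (nu' nv' : EuclideanSpace ℝ (Fin d))
    (hnu' : nu' = cos θ • nu + (sin θ * cos φ) • mu + (sin θ * sin φ) • l)
    (hnv' : nv' = cos θ • nv + (sin θ * cos φ) • mv + (sin θ * sin φ) • l) :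
    ‖nu'‖ = 1 ∧ ‖nv'‖ = 1 ∧
    ⟪nu', nv'⟫ - ⟪nu, nv⟫ = -(sin θ ^ 2 * sin φ ^ 2) * (⟪nu, nv⟫ - 1) ∧
    ‖nu' - nv'‖ ^ 2 - ‖nu - nv‖ ^ 2 = -(sin θ ^ 2 * sin φ ^ 2) * ‖nu - nv‖ ^ 2 ∧
    ‖nu' - nv'‖ ≤ ‖nu - nv‖ :=
  stmt9_general nu mu nv mv l hnu hmu hnv hmv hl hnumu hnvmv hlnu hlmu hlnv hlmv hframe1 hframe2 θ φ
    nu' nv' hnu' hnv'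
end

section
/- Let d ≥ 3 and let n_u, m_u, n_v, m_v, l be unit vectors in ℝ^d satisfying the frame hypothesis: n_u ⟂ m_u, n_v ⟂ m_v, l is orthogonal to each of n_u, m_u, n_v, m_v, and n_u·n_v = m_u·m_v, n_u·m_v = −m_u·n_v. Fix θ ∈ ℝ and for φ ∈ [0,π] set n'_u(φ) := cosθ·n_u + sinθ cosφ·m_u + sinθ sinφ·l and n'_v(φ) := cosθ·n_v + sinθ cosφ·m_v + sinθ sinφ·l. Then the average of the coupled post-collisional square distance with respect to the azimuthal density sin^{d−3}φ on [0,π] satisfies: ( ∫₀^π |n'_u(φ) − n'_v(φ)|² sin^{d−3}φ dφ ) / ( ∫₀^π sin^{d−3}φ dφ ) − |n_u − n_v|² = −sin²θ · (c_{d−1}/c_{d−3}) · |n_u − n_v|². -/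
/-!
Since `l` enters `n'_u(φ)` and `n'_v(φ)` with the same coefficient, it cancels, and
`n'_u(φ) − n'_v(φ) = cos θ (n_u − n_v) + sin θ cos φ (m_u − m_v)`. The frame hypothesis makes
`m_u − m_v` orthogonal to `n_u − n_v` and of the same length, so the square distance is
`(cos²θ + sin²θ cos²φ) |n_u − n_v|²`. Averaging `cos²φ = 1 − sin²φ` against `sin^{d−3}φ` gives
`1 − c_{d−1}/c_{d−3}`, because `∫₀^π sin^k = 2 c_k` by the symmetry `φ ↦ π − φ`.
-/

open Real
open scoped RealInnerProductSpace

/-- The `k`-th Wallis integral `c_k = ∫₀^{π/2} sin^k φ dφ`. -/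
noncomputable def wallis (k : ℕ) : ℝ := ∫ φ in (0 : ℝ)..(π / 2), sin φ ^ k

open intervalIntegral

theorem integral_sin_pow_zero_pi_eq_two_mul_wallis (k : ℕ) :
    ∫ φ in (0 : ℝ)..π, sin φ ^ k = 2 * wallis k := by
  have hint : ∀ a b : ℝ, IntervalIntegrable (fun φ => sin φ ^ k) MeasureTheory.volume a b :=
    fun a b => (continuous_sin.pow k).intervalIntegrable a b
  have hreflect : ∫ φ in (π / 2)..π, sin φ ^ k = wallis k := by
    have := integral_comp_sub_left (fun φ => sin φ ^ k) (a := π / 2) (b := π) π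
    simp only [sin_pi_sub, sub_self, show π - π / 2 = π / 2 by ring] at this
    rw [wallis, ← this]
  rw [← integral_add_adjacent_intervals (hint 0 (π / 2)) (hint (π / 2) π), hreflect, wallis]
  ring

theorem wallis_pos (k : ℕ) : 0 < wallis k := by
  have := integral_sin_pow_pos (n := k)
  rw [integral_sin_pow_zero_pi_eq_two_mul_wallis] at this
  linarith

theorem integral_const_add_mul_cos_sq_mul_sin_pow (p q : ℝ) (k : ℕ) :
    ∫ φ in (0 : ℝ)..π, (p + q * cos φ ^ 2) * sin φ ^ k =
      2 * ((p + q) * wallis k - q * wallis (k + 2)) := by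
  have hint : ∀ m : ℕ, IntervalIntegrable (fun φ => sin φ ^ m) MeasureTheory.volume 0 π :=
    fun m => (continuous_sin.pow m).intervalIntegrable 0 π
  have hintegrand : ∀ φ : ℝ, (p + q * cos φ ^ 2) * sin φ ^ k =
      (p + q) * sin φ ^ k - q * sin φ ^ (k + 2) := by
    intro φ
    rw [cos_sq', pow_add]
    ring
  simp only [hintegrand]
  rw [integral_sub ((hint k).const_mul _) ((hint (k + 2)).const_mul _), integral_const_mul,
    integral_const_mul, integral_sin_pow_zero_pi_eq_two_mul_wallis,
    integral_sin_pow_zero_pi_eq_two_mul_wallis]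
  ring

theorem norm_smul_add_smul_sq_of_inner_eq_zero {E : Type*} [NormedAddCommGroup E]
    [InnerProductSpace ℝ E] {a b : E} (hab : ⟪a, b⟫ = 0) (hba : ‖b‖ = ‖a‖) (s t : ℝ) :
    ‖s • a + t • b‖ ^ 2 = (s ^ 2 + t ^ 2) * ‖a‖ ^ 2 := by
  rw [norm_add_sq_real, real_inner_smul_left, real_inner_smul_right, hab, norm_smul, norm_smul,
    hba, mul_pow, mul_pow, Real.norm_eq_abs, Real.norm_eq_abs, sq_abs, sq_abs]
  ring

section Frame

variable {E : Type*} [NormedAddCommGroup E] [InnerProductSpace ℝ E] {nu mu nv mv : E}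

theorem inner_sub_sub_eq_zero_of_frame (hnumu : ⟪nu, mu⟫ = 0) (hnvmv : ⟪nv, mv⟫ = 0)
    (hframe2 : ⟪nu, mv⟫ = -⟪mu, nv⟫) : ⟪nu - nv, mu - mv⟫ = 0 := by
  rw [inner_sub_left, inner_sub_right, inner_sub_right, hnumu, hnvmv, hframe2,
    real_inner_comm nv mu]
  ring

theorem norm_sub_eq_of_frame (hnu : ‖nu‖ = 1) (hmu : ‖mu‖ = 1) (hnv : ‖nv‖ = 1)
    (hmv : ‖mv‖ = 1) (hframe1 : ⟪nu, nv⟫ = ⟪mu, mv⟫) : ‖mu - mv‖ = ‖nu - nv‖ := by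
  rw [← sq_eq_sq₀ (norm_nonneg _) (norm_nonneg _), norm_sub_sq_real, norm_sub_sq_real, hnu, hmu,
    hnv, hmv, hframe1]

end Frame

theorem stmt10_general {d : ℕ} (hd : 3 ≤ d)
    (nu mu nv mv l : EuclideanSpace ℝ (Fin d))
    (hnu : ‖nu‖ = 1) (hmu : ‖mu‖ = 1) (hnv : ‖nv‖ = 1) (hmv : ‖mv‖ = 1)
    (hnumu : ⟪nu, mu⟫ = 0) (hnvmv : ⟪nv, mv⟫ = 0)
    (hframe1 : ⟪nu, nv⟫ = ⟪mu, mv⟫) (hframe2 : ⟪nu, mv⟫ = -⟪mu, nv⟫)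
    (θ : ℝ) :
    (∫ φ in (0 : ℝ)..π,
        ‖(cos θ • nu + (sin θ * cos φ) • mu + (sin θ * sin φ) • l) -
          (cos θ • nv + (sin θ * cos φ) • mv + (sin θ * sin φ) • l)‖ ^ 2 * sin φ ^ (d - 3))
      / (∫ φ in (0 : ℝ)..π, sin φ ^ (d - 3))
      - ‖nu - nv‖ ^ 2 =
    -(sin θ ^ 2) * (wallis (d - 1) / wallis (d - 3)) * ‖nu - nv‖ ^ 2 := by
  obtain ⟨k, rfl⟩ := Nat.exists_eq_add_of_le' hd
  have hsq : ∀ φ : ℝ,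
      ‖(cos θ • nu + (sin θ * cos φ) • mu + (sin θ * sin φ) • l) -
          (cos θ • nv + (sin θ * cos φ) • mv + (sin θ * sin φ) • l)‖ ^ 2 * sin φ ^ k =
        (cos θ ^ 2 * ‖nu - nv‖ ^ 2 + sin θ ^ 2 * ‖nu - nv‖ ^ 2 * cos φ ^ 2) * sin φ ^ k := by
    intro φ
    rw [show (cos θ • nu + (sin θ * cos φ) • mu + (sin θ * sin φ) • l) -
          (cos θ • nv + (sin θ * cos φ) • mv + (sin θ * sin φ) • l) =
        cos θ • (nu - nv) + (sin θ * cos φ) • (mu - mv) by module,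
      norm_smul_add_smul_sq_of_inner_eq_zero (inner_sub_sub_eq_zero_of_frame hnumu hnvmv hframe2)
        (norm_sub_eq_of_frame hnu hmu hnv hmv hframe1)]
    ring
  simp only [Nat.add_sub_cancel, show k + 3 - 1 = k + 2 by omega, hsq,
    integral_const_add_mul_cos_sq_mul_sin_pow, integral_sin_pow_zero_pi_eq_two_mul_wallis]
  have hk := (wallis_pos k).ne'
  field_simp
  rw [cos_sq']
  ring

/-- Average quadratic contraction of the spherical coupling: averaging
the coupled post-collisional square distance against the azimuthal density `sin^{d−3}φ`
on `[0,π]` gives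
`avg |n'_u(φ) − n'_v(φ)|² − |n_u − n_v|² = −sin²θ (c_{d−1}/c_{d−3}) |n_u − n_v|²`. -/
theorem stmt10 {d : ℕ} (hd : 3 ≤ d)
    (nu mu nv mv l : EuclideanSpace ℝ (Fin d))
    (hnu : ‖nu‖ = 1) (hmu : ‖mu‖ = 1) (hnv : ‖nv‖ = 1) (hmv : ‖mv‖ = 1) (hl : ‖l‖ = 1)
    (hnumu : ⟪nu, mu⟫ = 0) (hnvmv : ⟪nv, mv⟫ = 0)
    (hlnu : ⟪l, nu⟫ = 0) (hlmu : ⟪l, mu⟫ = 0) (hlnv : ⟪l, nv⟫ = 0) (hlmv : ⟪l, mv⟫ = 0)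
    (hframe1 : ⟪nu, nv⟫ = ⟪mu, mv⟫) (hframe2 : ⟪nu, mv⟫ = -⟪mu, nv⟫)
    (θ : ℝ) :
    (∫ φ in (0 : ℝ)..π,
        ‖(cos θ • nu + (sin θ * cos φ) • mu + (sin θ * sin φ) • l) -
          (cos θ • nv + (sin θ * cos φ) • mv + (sin θ * sin φ) • l)‖ ^ 2 * sin φ ^ (d - 3))
      / (∫ φ in (0 : ℝ)..π, sin φ ^ (d - 3))
      - ‖nu - nv‖ ^ 2 =
    -(sin θ ^ 2) * (wallis (d - 1) / wallis (d - 3)) * ‖nu - nv‖ ^ 2 :=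
  stmt10_general hd nu mu nv mv l hnu hmu hnv hmv hnumu hnvmv hframe1 hframe2 θ
end

section
/- Let d ≥ 1 and let u, u_*, v, v_* ∈ ℝ^d with u ≠ u_* and v ≠ v_*. Set n_u := (u−u_*)/|u−u_*| and n_v := (v−v_*)/|v−v_*|. Let θ, φ ∈ ℝ and let n'_u, n'_v be unit vectors satisfying the spherical-coupling identity n'_u·n'_v − n_u·n_v = −sin²θ·sin²φ·(n_u·n_v − 1). Define the coupled post-collisional velocities u' := (u+u_*)/2 + (|u−u_*|/2)·n'_u, u'_* := (u+u_*)/2 − (|u−u_*|/2)·n'_u, v' := (v+v_*)/2 + (|v−v_*|/2)·n'_v, v'_* := (v+v_*)/2 − (|v−v_*|/2)·n'_v. Then |u'−v'|² + |u'_*−v'_*|² − |u−v|² − |u_*−v_*|² = −sin²θ·sin²φ·( |u−u_*||v−v_*| − (u−u_*)·(v−v_*) ), and this quantity is ≤ 0. -/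
/-!
Writing `m` for the difference of the two centres of mass, `u' - v' = m + w` and
`u'_* - v'_* = m - w` with `w = (|u - u_*|/2) n'_u - (|v - v_*|/2) n'_v`, while
`u - v = m + p` and `u_* - v_* = m - p` with `p = ((u - u_*) - (v - v_*))/2`.
By the parallelogram law the change of the sum of squares is `2(|w|² - |p|²)`, which expands
to `(u - u_*)·(v - v_*) - |u - u_*||v - v_*| n'_u·n'_v`. Multiplying the coupling identity
by `|u - u_*||v - v_*|` turns this into the claimed formula, and Cauchy–Schwarz gives its sign.
-/

open Real
open scoped RealInnerProductSpace

section InnerProductSpace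

variable {E : Type*} [NormedAddCommGroup E] [InnerProductSpace ℝ E]

theorem norm_add_sq_add_norm_sub_sq_sub (m w p : E) :
    ‖m + w‖ ^ 2 + ‖m - w‖ ^ 2 - ‖m + p‖ ^ 2 - ‖m - p‖ ^ 2 = 2 * (‖w‖ ^ 2 - ‖p‖ ^ 2) := by
  rw [norm_add_sq_real, norm_sub_sq_real, norm_add_sq_real, norm_sub_sq_real]
  ring

theorem norm_mul_norm_mul_inner_normalize (x y : E) :
    ‖x‖ * ‖y‖ * ⟪‖x‖⁻¹ • x, ‖y‖⁻¹ • y⟫ = ⟪x, y⟫ := by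
  rcases eq_or_ne x 0 with rfl | hx
  · simp
  rcases eq_or_ne y 0 with rfl | hy
  · simp
  rw [real_inner_smul_left, real_inner_smul_right]
  field_simp [norm_ne_zero_iff.mpr hx, norm_ne_zero_iff.mpr hy]

theorem norm_smul_sub_smul_sq_of_norm_eq_one {a b : ℝ} {x y : E} (hx : ‖x‖ = 1)
    (hy : ‖y‖ = 1) : ‖a • x - b • y‖ ^ 2 = a ^ 2 + b ^ 2 - 2 * (a * b * ⟪x, y⟫) := by
  rw [norm_sub_sq_real, real_inner_smul_left, real_inner_smul_right, norm_smul, norm_smul,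
    hx, hy, Real.norm_eq_abs, Real.norm_eq_abs]
  simp only [mul_one, sq_abs]
  ring

theorem sum_norm_sq_sub_post_collision_sub (u us v vs nu nv : E) (hnu : ‖nu‖ = 1)
    (hnv : ‖nv‖ = 1) :
    ‖((2 : ℝ)⁻¹ • (u + us) + (‖u - us‖ / 2) • nu)
          - ((2 : ℝ)⁻¹ • (v + vs) + (‖v - vs‖ / 2) • nv)‖ ^ 2
      + ‖((2 : ℝ)⁻¹ • (u + us) - (‖u - us‖ / 2) • nu)
          - ((2 : ℝ)⁻¹ • (v + vs) - (‖v - vs‖ / 2) • nv)‖ ^ 2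
      - ‖u - v‖ ^ 2 - ‖us - vs‖ ^ 2 =
      ⟪u - us, v - vs⟫ - ‖u - us‖ * ‖v - vs‖ * ⟪nu, nv⟫ := by
  set m := (2 : ℝ)⁻¹ • (u + us) - (2 : ℝ)⁻¹ • (v + vs)
  set w := (‖u - us‖ / 2) • nu - (‖v - vs‖ / 2) • nv
  set p := (2 : ℝ)⁻¹ • ((u - us) - (v - vs))
  have hw_norm : ‖w‖ ^ 2 = (‖u - us‖ / 2) ^ 2 + (‖v - vs‖ / 2) ^ 2
      - 2 * (‖u - us‖ / 2 * (‖v - vs‖ / 2) * ⟪nu, nv⟫) :=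
    norm_smul_sub_smul_sq_of_norm_eq_one hnu hnv
  have hp_norm : ‖p‖ ^ 2 = (‖u - us‖ ^ 2 + ‖v - vs‖ ^ 2 - 2 * ⟪u - us, v - vs⟫) / 4 := by
    rw [norm_smul, mul_pow, norm_sub_sq_real, norm_inv, Real.norm_two]
    ring
  have h₁ : ((2 : ℝ)⁻¹ • (u + us) + (‖u - us‖ / 2) • nu)
      - ((2 : ℝ)⁻¹ • (v + vs) + (‖v - vs‖ / 2) • nv) = m + w := by module
  have h₂ : ((2 : ℝ)⁻¹ • (u + us) - (‖u - us‖ / 2) • nu)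
      - ((2 : ℝ)⁻¹ • (v + vs) - (‖v - vs‖ / 2) • nv) = m - w := by module
  have h₃ : u - v = m + p := by module
  have h₄ : us - vs = m - p := by module
  rw [h₁, h₂, h₃, h₄, norm_add_sq_add_norm_sub_sq_sub, hw_norm, hp_norm]
  ring

end InnerProductSpace

theorem stmt11_general {d : ℕ}
    (u us v vs : EuclideanSpace ℝ (Fin d))
    (θ φ : ℝ)
    (nu' nv' : EuclideanSpace ℝ (Fin d)) (hnu' : ‖nu'‖ = 1) (hnv' : ‖nv'‖ = 1)
    (hcoupl : ⟪nu', nv'⟫ - ⟪‖u - us‖⁻¹ • (u - us), ‖v - vs‖⁻¹ • (v - vs)⟫ =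
      -(sin θ ^ 2 * sin φ ^ 2) * (⟪‖u - us‖⁻¹ • (u - us), ‖v - vs‖⁻¹ • (v - vs)⟫ - 1))
    (u' us' v' vs' : EuclideanSpace ℝ (Fin d))
    (hu' : u' = (2 : ℝ)⁻¹ • (u + us) + (‖u - us‖ / 2) • nu')
    (hus' : us' = (2 : ℝ)⁻¹ • (u + us) - (‖u - us‖ / 2) • nu')
    (hv' : v' = (2 : ℝ)⁻¹ • (v + vs) + (‖v - vs‖ / 2) • nv')
    (hvs' : vs' = (2 : ℝ)⁻¹ • (v + vs) - (‖v - vs‖ / 2) • nv') :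
    ‖u' - v'‖ ^ 2 + ‖us' - vs'‖ ^ 2 - ‖u - v‖ ^ 2 - ‖us - vs‖ ^ 2 =
      -(sin θ ^ 2 * sin φ ^ 2) * (‖u - us‖ * ‖v - vs‖ - ⟪u - us, v - vs⟫) ∧
    ‖u' - v'‖ ^ 2 + ‖us' - vs'‖ ^ 2 - ‖u - v‖ ^ 2 - ‖us - vs‖ ^ 2 ≤ 0 := by
  have hchange : ‖u' - v'‖ ^ 2 + ‖us' - vs'‖ ^ 2 - ‖u - v‖ ^ 2 - ‖us - vs‖ ^ 2 =
      -(sin θ ^ 2 * sin φ ^ 2) * (‖u - us‖ * ‖v - vs‖ - ⟪u - us, v - vs⟫) := by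
    rw [hu', hus', hv', hvs', sum_norm_sq_sub_post_collision_sub u us v vs nu' nv' hnu' hnv',
      ← norm_mul_norm_mul_inner_normalize (u - us) (v - vs)]
    linear_combination (-(‖u - us‖ * ‖v - vs‖)) * hcoupl
  refine ⟨hchange, hchange ▸ ?_⟩
  have hcs : 0 ≤ ‖u - us‖ * ‖v - vs‖ - ⟪u - us, v - vs⟫ :=
    sub_nonneg.mpr (real_inner_le_norm _ _)
  rw [neg_mul]
  exact neg_nonpos.mpr (mul_nonneg (by positivity) hcs)

/-- Contraction of coupled collisions: if the coupled post-collisional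
directions `n'_u, n'_v` satisfy the spherical-coupling identity
`n'_u·n'_v − n_u·n_v = −sin²θ sin²φ (n_u·n_v − 1)` with
`n_u = (u−u_*)/|u−u_*|`, `n_v = (v−v_*)/|v−v_*|`, then the coupled post-collisional
velocities satisfy
`|u'−v'|² + |u'_*−v'_*|² − |u−v|² − |u_*−v_*|²
  = −sin²θ sin²φ (|u−u_*||v−v_*| − (u−u_*)·(v−v_*)) ≤ 0`. -/
theorem stmt11 {d : ℕ} (hd : 1 ≤ d)
    (u us v vs : EuclideanSpace ℝ (Fin d)) (hu : u ≠ us) (hv : v ≠ vs)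
    (θ φ : ℝ)
    (nu' nv' : EuclideanSpace ℝ (Fin d)) (hnu' : ‖nu'‖ = 1) (hnv' : ‖nv'‖ = 1)
    (hcoupl : ⟪nu', nv'⟫ - ⟪‖u - us‖⁻¹ • (u - us), ‖v - vs‖⁻¹ • (v - vs)⟫ =
      -(sin θ ^ 2 * sin φ ^ 2) * (⟪‖u - us‖⁻¹ • (u - us), ‖v - vs‖⁻¹ • (v - vs)⟫ - 1))
    (u' us' v' vs' : EuclideanSpace ℝ (Fin d))
    (hu' : u' = (2 : ℝ)⁻¹ • (u + us) + (‖u - us‖ / 2) • nu')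
    (hus' : us' = (2 : ℝ)⁻¹ • (u + us) - (‖u - us‖ / 2) • nu')
    (hv' : v' = (2 : ℝ)⁻¹ • (v + vs) + (‖v - vs‖ / 2) • nv')
    (hvs' : vs' = (2 : ℝ)⁻¹ • (v + vs) - (‖v - vs‖ / 2) • nv') :
    ‖u' - v'‖ ^ 2 + ‖us' - vs'‖ ^ 2 - ‖u - v‖ ^ 2 - ‖us - vs‖ ^ 2 =
      -(sin θ ^ 2 * sin φ ^ 2) * (‖u - us‖ * ‖v - vs‖ - ⟪u - us, v - vs⟫) ∧
    ‖u' - v'‖ ^ 2 + ‖us' - vs'‖ ^ 2 - ‖u - v‖ ^ 2 - ‖us - vs‖ ^ 2 ≤ 0 :=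
  stmt11_general u us v vs θ φ nu' nv' hnu' hnv' hcoupl u' us' v' vs' hu' hus' hv' hvs'
end
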